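/- arXiv:1512.05640 — 4 statements merged into one kernel-verified Lean document; each statement's English description precedes it below -/
import Mathlib

section
/- With χ = (1+i)/2, the operators Q(l,m) = χD(l,m) + χ*D†(l,m) are Hermitian and satisfy the orthogonality relation Tr(Q(l,m)Q(l',m')) = d·δ_{l,l'}·δ_{m,m'} for all (l,m),(l',m') in {0,...,d-1}². -/
open Matrix Complex BigOperators

/-- The clock operator `Z` on `ℂ^d`: `Z|j⟩ = e^{2πij/d}|j⟩`. -/
noncomputable def Zmat (d : ℕ) : Matrix (Fin d) (Fin d) ℂ :=
  Matrix.diagonal fun j => Complex.exp (2 * (Real.pi : ℂ) * Complex.I * ((j : ℕ) : ℂ) / (d : ℂ))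

/-- The shift operator `X` on `ℂ^d`: `X|j⟩ = |j+1 mod d⟩`. -/
noncomputable def Xmat (d : ℕ) [NeZero d] : Matrix (Fin d) (Fin d) ℂ :=
  Matrix.of fun j k : Fin d => if j = k + 1 then 1 else 0

/-- Discrete Heisenberg–Weyl displacement operator `D(l,m) = Z^l X^m e^{-iπlm/d}`. -/
noncomputable def Dmat (d : ℕ) [NeZero d] (l m : ℕ) : Matrix (Fin d) (Fin d) ℂ :=
  Complex.exp (-((Real.pi : ℂ) * Complex.I * (l : ℂ) * (m : ℂ) / (d : ℂ))) • (Zmat d ^ l * Xmat d ^ m)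

/-- Heisenberg–Weyl observable `Q(l,m) = χ D(l,m) + χ* D(l,m)†` with `χ = (1+i)/2`. -/
noncomputable def Qmat (d : ℕ) [NeZero d] (l m : ℕ) : Matrix (Fin d) (Fin d) ℂ :=
  ((1 + Complex.I) / 2) • Dmat d l m + ((1 - Complex.I) / 2) • (Dmat d l m)ᴴ

/-!
With `Q(A) = χA + χ̄A†`, `χ² = i/2` and `|χ|² = 1/2` give
`Tr(Q(A)Q(B)) = Re Tr(AB†) - Im Tr(AB)`. Each `Z^l X^m` is a weighted shift matrix, so both
traces reduce to geometric sums of `d`-th roots of unity: `Tr(D(l,m)D(l',m')†) = d δ_{ll'} δ_{mm'}`,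
while `Tr(D(l,m)D(l',m'))` vanishes unless `l' ≡ -l` and `m' ≡ -m`, and then equals
`d e^{iπ(l'm' - lm)/d}` with `l'm' ≡ lm (mod d)`, a real number.
-/

open Fin.NatCast Fin.CommRing

section WeightedShift

variable {G R : Type*} [AddCommGroup G] [DecidableEq G]

def weightedShift [Zero R] (f : G → R) (s : G) : Matrix G G R :=
  Matrix.of fun j k => if j = k + s then f j else 0

@[simp]
theorem weightedShift_apply [Zero R] (f : G → R) (s j k : G) :
    weightedShift f s j k = if j = k + s then f j else 0 := rfl

variable [Fintype G]

theorem diagonal_mul_weightedShift [NonUnitalNonAssocSemiring R] (v f : G → R) (s : G) :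
    diagonal v * weightedShift f s = weightedShift (v * f) s := by
  ext j k
  by_cases h : j = k + s <;> simp [diagonal_mul, h]

theorem weightedShift_mul_weightedShift [NonUnitalNonAssocSemiring R] (f g : G → R) (s t : G) :
    weightedShift f s * weightedShift g t = weightedShift (fun j => f j * g (j - s)) (s + t) := by
  ext j k
  simp only [mul_apply, weightedShift_apply, ite_mul, mul_ite, zero_mul, mul_zero,
    Finset.sum_ite_eq', Finset.mem_univ, if_true]
  rw [add_comm s t, ← add_assoc]
  split_ifs with h
  · rw [h, add_sub_cancel_right]
  · rfl

theorem trace_weightedShift_mul_conjTranspose [NonUnitalNonAssocSemiring R] [StarRing R]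
    (f g : G → R) (s t : G) :
    trace (weightedShift f s * (weightedShift g t)ᴴ) =
      if s = t then ∑ j, f j * star (g j) else 0 := by
  have entry : ∀ j k : G, weightedShift f s j k * star (weightedShift g t j k) =
      if k = j - s then (if s = t then f j * star (g j) else 0) else 0 := by
    intro j k
    by_cases hk : k = j - s
    · subst hk
      have : j - s + t = j ↔ s = t := by
        rw [sub_add_eq_add_sub, sub_eq_iff_eq_add, add_left_cancel_iff, eq_comm]
      by_cases hst : s = t <;> simp [hst, eq_comm (a := j), this]
    · have hj : j ≠ k + s := fun hj => hk (eq_sub_of_add_eq hj.symm)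
      simp [hk, hj]
  simp only [trace, diag, mul_apply, conjTranspose_apply, entry, Finset.sum_ite_eq',
    Finset.mem_univ, if_true]
  split_ifs <;> simp

theorem trace_weightedShift_mul [NonUnitalNonAssocSemiring R] (f g : G → R) (s t : G) :
    trace (weightedShift f s * weightedShift g t) =
      if s + t = 0 then ∑ j, f j * g (j + t) else 0 := by
  have entry : ∀ j k : G, weightedShift f s j k * weightedShift g t k j =
      if k = j + t then (if s + t = 0 then f j * g (j + t) else 0) else 0 := by
    intro j k
    by_cases hk : k = j + t
    · subst hk
      have : j = j + t + s ↔ s + t = 0 := by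
        rw [add_assoc, left_eq_add, add_comm]
      by_cases hst : s + t = 0 <;> simp [this, hst]
    · simp [hk]
  simp only [trace, diag, mul_apply, entry, Finset.sum_ite_eq', Finset.mem_univ, if_true]
  split_ifs <;> simp

end WeightedShift

section ChiObservable

variable {n : Type*}

noncomputable def chiObservable (A : Matrix n n ℂ) : Matrix n n ℂ :=
  ((1 + Complex.I) / 2) • A + ((1 - Complex.I) / 2) • Aᴴ

theorem isHermitian_chiObservable (A : Matrix n n ℂ) : (chiObservable A).IsHermitian := by
  have hχ : star ((1 + Complex.I) / 2) = (1 - Complex.I) / 2 := by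
    apply Complex.ext <;> simp
  rw [IsHermitian, chiObservable, conjTranspose_add, conjTranspose_smul, conjTranspose_smul,
    conjTranspose_conjTranspose, hχ, ← hχ, star_star, add_comm]

theorem trace_chiObservable_mul [Fintype n] (A B : Matrix n n ℂ) :
    trace (chiObservable A * chiObservable B) = (trace (A * Bᴴ)).re - (trace (A * B)).im := by
  have hS : trace (Aᴴ * B) = star (trace (A * Bᴴ)) := by
    rw [← trace_conjTranspose, conjTranspose_mul, conjTranspose_conjTranspose, trace_mul_comm]
  have hT : trace (Aᴴ * Bᴴ) = star (trace (A * B)) := by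
    rw [← trace_conjTranspose, conjTranspose_mul, trace_mul_comm]
  simp only [chiObservable, add_mul, mul_add, smul_mul_smul_comm, trace_add, trace_smul, hS, hT,
    smul_eq_mul]
  apply Complex.ext <;> simp <;> ring

end ChiObservable

theorem sum_fin_pow_eq_ite {K : Type*} [Field K] [DecidableEq K] {z : K} {d : ℕ}
    (hz : z ^ d = 1) :
    ∑ j : Fin d, z ^ (j : ℕ) = if z = 1 then (d : K) else 0 := by
  rw [Fin.sum_univ_eq_sum_range (z ^ ·)]
  split_ifs with h
  · simp [h]
  · rw [geom_sum_eq h, hz, sub_self, zero_div]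

-- `ζ = e^{iπ/d}`: `ζ²` is the clock eigenvalue `e^{2πi/d}` and `(ζ^{lm})⁻¹` the phase of `D(l,m)`.
noncomputable def hwZeta (d : ℕ) : ℂ := Complex.exp (Real.pi * Complex.I / d)

section HwZeta

variable (d : ℕ) [NeZero d]

theorem isPrimitiveRoot_hwZeta : IsPrimitiveRoot (hwZeta d) (2 * d) := by
  have := Complex.isPrimitiveRoot_exp (2 * d) (by simp [NeZero.ne d])
  convert this using 1
  rw [hwZeta]
  congr 1
  push_cast
  field_simp

theorem isPrimitiveRoot_hwZeta_sq : IsPrimitiveRoot (hwZeta d ^ 2) d := by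
  simpa using (isPrimitiveRoot_hwZeta d).pow_of_dvd two_ne_zero (dvd_mul_right 2 d)

theorem star_hwZeta : star (hwZeta d) = (hwZeta d)⁻¹ := by
  rw [Complex.inv_eq_conj ((isPrimitiveRoot_hwZeta d).norm'_eq_one (by simp [NeZero.ne d]))]
  rfl

theorem hwZeta_sq_pow_eq_pow_iff (a b : ℕ) :
    (hwZeta d ^ 2) ^ a = (hwZeta d ^ 2) ^ b ↔ a ≡ b [MOD d] := by
  rw [((isPrimitiveRoot_hwZeta_sq d).isOfFinOrder (NeZero.ne d)).pow_eq_pow_iff_modEq,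
    ← (isPrimitiveRoot_hwZeta_sq d).eq_orderOf]

end HwZeta

section HeisenbergWeyl

variable {d : ℕ}

theorem Zmat_eq_diagonal : Zmat d = diagonal fun j : Fin d => (hwZeta d ^ 2) ^ (j : ℕ) := by
  rw [Zmat]
  congr! 2 with j
  rw [hwZeta, ← Complex.exp_nat_mul, ← Complex.exp_nat_mul]
  congr 1
  push_cast
  ring

variable [NeZero d]

theorem Xmat_pow (m : ℕ) : Xmat d ^ m = weightedShift (fun _ => 1) (m : Fin d) := by
  induction m with
  | zero => ext j k; simp [one_apply]
  | succ m ih =>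
    rw [pow_succ, ih, show Xmat d = weightedShift (fun _ => 1) 1 from rfl,
      weightedShift_mul_weightedShift]
    simp

theorem Dmat_eq_smul_weightedShift (l m : ℕ) :
    Dmat d l m = (hwZeta d ^ (l * m))⁻¹ •
      weightedShift (fun j : Fin d => ((hwZeta d ^ 2) ^ l) ^ (j : ℕ)) (m : Fin d) := by
  have phase : Complex.exp (-(Real.pi * Complex.I * l * m / d)) = (hwZeta d ^ (l * m))⁻¹ := by
    rw [hwZeta, ← Complex.exp_nat_mul, ← Complex.exp_neg]
    push_cast
    ring_nf
  rw [Dmat, phase, Zmat_eq_diagonal, diagonal_pow, Xmat_pow, diagonal_mul_weightedShift]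
  congr 2 with j
  simp only [Pi.mul_apply, Pi.pow_apply, mul_one, ← pow_mul]
  ring_nf

theorem sum_hwZeta_sq_pow (n : ℕ) :
    ∑ j : Fin d, ((hwZeta d ^ 2) ^ n) ^ (j : ℕ) = if d ∣ n then (d : ℂ) else 0 := by
  have hω := isPrimitiveRoot_hwZeta_sq d
  rw [sum_fin_pow_eq_ite (by rw [← pow_mul, mul_comm, pow_mul, hω.pow_eq_one, one_pow])]
  simp only [hω.pow_eq_one_iff_dvd]

theorem sum_hwZeta_sq_pow_mul_star (a b : ℕ) :
    ∑ j : Fin d, ((hwZeta d ^ 2) ^ a) ^ (j : ℕ) * star (((hwZeta d ^ 2) ^ b) ^ (j : ℕ)) =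
      if a ≡ b [MOD d] then (d : ℂ) else 0 := by
  have hω := isPrimitiveRoot_hwZeta_sq d
  have hpow (n : ℕ) : ((hwZeta d ^ 2) ^ n) ^ d = 1 := by
    rw [← pow_mul, mul_comm, pow_mul, hω.pow_eq_one, one_pow]
  have hstar (n j : ℕ) : star (((hwZeta d ^ 2) ^ n) ^ j) = (((hwZeta d ^ 2) ^ n)⁻¹) ^ j := by
    simp only [star_pow, star_hwZeta, inv_pow]
  simp only [hstar, ← mul_pow, ← div_eq_mul_inv]
  rw [sum_fin_pow_eq_ite (by rw [div_pow, hpow, hpow, div_one])]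
  simp only [div_eq_one_iff_eq (pow_ne_zero _ (hω.ne_zero (NeZero.ne d))),
    hwZeta_sq_pow_eq_pow_iff]

theorem trace_Dmat_mul_conjTranspose_Dmat (l m l' m' : Fin d) :
    trace (Dmat d l m * (Dmat d l' m')ᴴ) = if l = l' ∧ m = m' then (d : ℂ) else 0 := by
  simp only [Dmat_eq_smul_weightedShift, conjTranspose_smul, smul_mul_smul_comm, trace_smul,
    trace_weightedShift_mul_conjTranspose, Fin.cast_val_eq_self, sum_hwZeta_sq_pow_mul_star]
  have hmod : (l : ℕ) ≡ l' [MOD d] ↔ l = l' :=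
    ⟨fun h => Fin.ext (h.eq_of_lt_of_lt l.isLt l'.isLt), fun h => h ▸ rfl⟩
  simp only [hmod, ← ite_and, and_comm (a := m = m')]
  split_ifs with h
  · obtain ⟨rfl, rfl⟩ := h
    have hζ : hwZeta d ^ ((l : ℕ) * m) ≠ 0 := pow_ne_zero _ (Complex.exp_ne_zero _)
    rw [smul_eq_mul, star_inv₀, star_pow, star_hwZeta, inv_pow, inv_inv, inv_mul_cancel₀ hζ,
      one_mul]
  · rw [smul_zero]

theorem trace_Dmat_mul_Dmat (l m l' m' : ℕ) :
    trace (Dmat d l m * Dmat d l' m') =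
      if d ∣ m + m' ∧ d ∣ l + l' then d * hwZeta d ^ (l' * m') / hwZeta d ^ (l * m) else 0 := by
  have hshift (j : Fin d) : ((hwZeta d ^ 2) ^ l') ^ ((j + (m' : Fin d) : Fin d) : ℕ) =
      ((hwZeta d ^ 2) ^ l') ^ ((j : ℕ) + m') := by
    rw [← pow_mul (hwZeta d ^ 2) l', ← pow_mul (hwZeta d ^ 2) l', hwZeta_sq_pow_eq_pow_iff,
      Fin.val_add, Fin.val_natCast]
    exact ((Nat.mod_modEq _ d).trans ((Nat.mod_modEq m' d).add_left _)).mul_left _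
  have hsum : ∑ j : Fin d, ((hwZeta d ^ 2) ^ l) ^ (j : ℕ) *
      ((hwZeta d ^ 2) ^ l') ^ ((j + (m' : Fin d) : Fin d) : ℕ) =
      ((hwZeta d ^ 2) ^ l') ^ m' * if d ∣ l + l' then (d : ℂ) else 0 := by
    simp only [hshift, pow_add, ← sum_hwZeta_sq_pow, Finset.mul_sum]
    refine Finset.sum_congr rfl fun j _ => ?_
    ring
  simp only [Dmat_eq_smul_weightedShift, smul_mul_smul_comm, trace_smul, trace_weightedShift_mul,
    ← Nat.cast_add, Fin.natCast_eq_zero, hsum]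
  have hζ : hwZeta d ≠ 0 := Complex.exp_ne_zero _
  by_cases hm : d ∣ m + m'
  · by_cases hl : d ∣ l + l'
    · simp only [hm, hl, and_self, if_true, smul_eq_mul]
      field_simp
      ring
    · simp [hm, hl]
  · simp [hm]

theorem star_hwZeta_pow_div_of_modEq {a b : ℕ} (h : a ≡ b [MOD d]) :
    star (hwZeta d ^ a / hwZeta d ^ b) = hwZeta d ^ a / hwZeta d ^ b := by
  have hζ : hwZeta d ≠ 0 := Complex.exp_ne_zero _
  have hsq := (hwZeta_sq_pow_eq_pow_iff d b a).2 h.symm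
  rw [← pow_mul, ← pow_mul, two_mul, two_mul, pow_add, pow_add] at hsq
  rw [star_div₀, star_pow, star_pow, star_hwZeta, inv_pow, inv_pow, inv_div_inv,
    div_eq_div_iff (pow_ne_zero _ hζ) (pow_ne_zero _ hζ), hsq]

theorem im_trace_Dmat_mul_Dmat (l m l' m' : ℕ) : (trace (Dmat d l m * Dmat d l' m')).im = 0 := by
  rw [trace_Dmat_mul_Dmat]
  split_ifs with h
  · obtain ⟨hm, hl⟩ := h
    have hmod : l' * m' ≡ l * m [MOD d] := by
      have hneg {a b : ℕ} (hab : d ∣ a + b) : (b : ZMod d) = -a :=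
        eq_neg_of_add_eq_zero_right (by exact_mod_cast (ZMod.natCast_eq_zero_iff _ _).2 hab)
      rw [← ZMod.natCast_eq_natCast_iff]
      push_cast
      rw [hneg hl, hneg hm, neg_mul_neg]
    rw [← Complex.conj_eq_iff_im, mul_div_assoc, map_mul, Complex.conj_natCast]
    exact congrArg _ (star_hwZeta_pow_div_of_modEq hmod)
  · exact Complex.zero_im

end HeisenbergWeyl

/-- The Heisenberg–Weyl observables `Q(l,m)` are Hermitian and orthogonal:
`Tr(Q(l,m) Q(l',m')) = d δ_{l,l'} δ_{m,m'}`. -/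
theorem HW_observables_hermitian_orthogonal (d : ℕ) [NeZero d] (l m l' m' : Fin d) :
    (Qmat d l m).IsHermitian ∧
    Matrix.trace (Qmat d l m * Qmat d l' m') =
      if l = l' ∧ m = m' then (d : ℂ) else 0 := by
  have hQ (a b : ℕ) : Qmat d a b = chiObservable (Dmat d a b) := rfl
  refine ⟨hQ l m ▸ isHermitian_chiObservable _, ?_⟩
  rw [hQ, hQ, trace_chiObservable_mul, trace_Dmat_mul_conjTranspose_Dmat, im_trace_Dmat_mul_Dmat]
  split_ifs <;> simp
end

section
/- (Anticommutativity bound) Let {λ_i}_{i∈I}, I = {1,...,d²}, be an orthonormal self-adjoint basis of the d×d Hermitian matrices, and A ⊆ I a subset such that (1/2)√(Σ_{i≠j∈A} ⟨{λ_i,λ_j}⟩_ρ²) ≤ K for a density matrix ρ = Σ_{i∈A} c_i λ_i + Σ_{l∉A} c_l λ_l. Then Σ_{i∈A} c_i² ≤ (max_{i∈A} ⟨λ_i²⟩_ρ + K) / (min_{i∈A} Tr(λ_i²))². -/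
open Matrix Complex BigOperators
open scoped ComplexOrder

/-!
Put `O = ∑_{i∈A} c_i λ_i`, `S = ∑_{i∈A} c_i²` and `t = min_{i∈A} Tr(λ_i²) > 0`. By orthogonality
`⟨O⟩_ρ = ∑_{i∈A} c_i² Tr(λ_i²) ≥ t S`, and positivity of the variance of `O` gives
`⟨O⟩_ρ² ≤ ⟨O²⟩_ρ`. Writing `2 O² = ∑_{i,j∈A} c_i c_j {λ_i, λ_j}`, the diagonal terms contribute at
most `2 S max_{i∈A} ⟨λ_i²⟩_ρ`, and Cauchy–Schwarz bounds the off-diagonal ones by `2 S K`.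
Hence `t² S² ≤ S (max_{i∈A} ⟨λ_i²⟩_ρ + K)`.
-/

namespace Finset

variable {ι : Type*} [DecidableEq ι]

theorem sum_offDiag_eq_sum_sum_ite {M : Type*} [AddCommMonoid M] (s : Finset ι)
    (f : ι → ι → M) :
    ∑ p ∈ s.offDiag, f p.1 p.2 = ∑ i ∈ s, ∑ j ∈ s, if i ≠ j then f i j else 0 := by
  have hfilter : s.offDiag = (s ×ˢ s).filter fun p => p.1 ≠ p.2 := by
    ext p
    simp [mem_offDiag, and_assoc]
  rw [hfilter, sum_filter, sum_product]

theorem sum_sum_eq_sum_add_sum_offDiag {M : Type*} [AddCommMonoid M] (s : Finset ι)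
    (f : ι → ι → M) :
    ∑ i ∈ s, ∑ j ∈ s, f i j = ∑ i ∈ s, f i i + ∑ p ∈ s.offDiag, f p.1 p.2 := by
  rw [← sum_product', ← diag_union_offDiag, sum_union (disjoint_diag_offDiag _), sum_diag]

theorem sum_offDiag_mul_mul_le (s : Finset ι) (c : ι → ℝ) (a : ι → ι → ℝ) :
    ∑ p ∈ s.offDiag, c p.1 * c p.2 * a p.1 p.2 ≤
      (∑ i ∈ s, c i ^ 2) * √(∑ p ∈ s.offDiag, a p.1 p.2 ^ 2) := by
  have hc : ∑ p ∈ s.offDiag, (c p.1 * c p.2) ^ 2 ≤ (∑ i ∈ s, c i ^ 2) ^ 2 :=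
    calc ∑ p ∈ s.offDiag, (c p.1 * c p.2) ^ 2 ≤ ∑ p ∈ s ×ˢ s, (c p.1 * c p.2) ^ 2 :=
          sum_le_sum_of_subset_of_nonneg (diag_union_offDiag s ▸ subset_union_right)
            fun _ _ _ => sq_nonneg _
      _ = (∑ i ∈ s, c i ^ 2) ^ 2 := by simp only [sum_product, sq, sum_mul_sum, mul_mul_mul_comm]
  calc ∑ p ∈ s.offDiag, c p.1 * c p.2 * a p.1 p.2
      ≤ √(∑ p ∈ s.offDiag, (c p.1 * c p.2) ^ 2) * √(∑ p ∈ s.offDiag, a p.1 p.2 ^ 2) :=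
        Real.sum_mul_le_sqrt_mul_sqrt _ _ _
    _ ≤ (∑ i ∈ s, c i ^ 2) * √(∑ p ∈ s.offDiag, a p.1 p.2 ^ 2) := by
        gcongr
        exact Real.sqrt_le_iff.2 ⟨by positivity, hc⟩

theorem sum_sum_mul_mul_le (s : Finset ι) (c : ι → ℝ) (a : ι → ι → ℝ) {m : ℝ}
    (hm : ∀ i ∈ s, a i i ≤ m) :
    ∑ i ∈ s, ∑ j ∈ s, c i * c j * a i j ≤
      (∑ i ∈ s, c i ^ 2) * (m + √(∑ p ∈ s.offDiag, a p.1 p.2 ^ 2)) := by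
  have hdiag : ∑ i ∈ s, c i * c i * a i i ≤ (∑ i ∈ s, c i ^ 2) * m := by
    rw [sum_mul]
    refine sum_le_sum fun i hi => ?_
    rw [← sq]
    exact mul_le_mul_of_nonneg_left (hm i hi) (sq_nonneg _)
  rw [sum_sum_eq_sum_add_sum_offDiag, mul_add]
  exact add_le_add hdiag (sum_offDiag_mul_mul_le s c a)

end Finset

theorem le_div_sq_of_mul_le_of_sq_le_mul {S t x b : ℝ} (ht : 0 < t) (hS : 0 ≤ S) (hb : 0 ≤ b)
    (hx : t * S ≤ x) (hsq : x ^ 2 ≤ S * b) : S ≤ b / t ^ 2 := by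
  rw [le_div_iff₀ (by positivity)]
  rcases hS.eq_or_lt with rfl | hS
  · simpa using hb
  · refine le_of_mul_le_mul_left ?_ hS
    nlinarith [pow_le_pow_left₀ (by positivity) hx 2]

theorem Matrix.IsHermitian.re_trace_mul_self_pos {n : Type*} [Fintype n] {M : Matrix n n ℂ}
    (hM : M.IsHermitian) (h : M ≠ 0) : 0 < (M * M).trace.re := by
  have hpos : 0 < (Mᴴ * M).trace :=
    (posSemidef_conjTranspose_mul_self M).trace_nonneg.lt_of_ne'
      (trace_conjTranspose_mul_self_eq_zero_iff.not.2 h)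
  rw [hM.eq] at hpos
  exact (Complex.pos_iff.1 hpos).1

theorem Matrix.trace_sum_smul_mul_of_orthogonal {n ι R : Type*} [Fintype n] [Fintype ι]
    [CommSemiring R] {lam : ι → Matrix n n R}
    (horth : ∀ i j, i ≠ j → (lam i * lam j).trace = 0) (c : ι → R) (i : ι) :
    ((∑ j, c j • lam j) * lam i).trace = c i * (lam i * lam i).trace := by
  simp only [Matrix.sum_mul, smul_mul_assoc, trace_sum, trace_smul, smul_eq_mul]
  exact Finset.sum_eq_single_of_mem i (Finset.mem_univ i) fun j _ hji => by
    rw [horth j i hji, mul_zero]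

section Expectation

variable {n : Type*} [Fintype n]

/-- `⟨M⟩_ρ`, as a real number: `Tr(ρ M)` is real when `ρ` and `M` are Hermitian. -/
def expectation (ρ M : Matrix n n ℂ) : ℝ := (ρ * M).trace.re

theorem expectation_add (ρ M N : Matrix n n ℂ) :
    expectation ρ (M + N) = expectation ρ M + expectation ρ N := by
  simp only [expectation, Matrix.mul_add, trace_add, Complex.add_re]

theorem expectation_sub (ρ M N : Matrix n n ℂ) :
    expectation ρ (M - N) = expectation ρ M - expectation ρ N := by
  simp only [expectation, Matrix.mul_sub, trace_sub, Complex.sub_re]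

theorem expectation_sum {ι : Type*} (ρ : Matrix n n ℂ) (s : Finset ι) (M : ι → Matrix n n ℂ) :
    expectation ρ (∑ i ∈ s, M i) = ∑ i ∈ s, expectation ρ (M i) := by
  simp only [expectation, Matrix.mul_sum, trace_sum, Complex.re_sum]

theorem expectation_ofReal_smul (ρ M : Matrix n n ℂ) (r : ℝ) :
    expectation ρ ((r : ℂ) • M) = r * expectation ρ M := by
  simp only [expectation, Matrix.mul_smul, trace_smul, smul_eq_mul, Complex.re_ofReal_mul]

theorem expectation_conjTranspose_mul_self_nonneg {ρ : Matrix n n ℂ} (hρ : ρ.PosSemidef)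
    (X : Matrix n n ℂ) : 0 ≤ expectation ρ (Xᴴ * X) := by
  have h := (hρ.mul_mul_conjTranspose_same X).trace_nonneg
  rw [Matrix.mul_assoc, trace_mul_comm] at h
  rw [expectation, ← Matrix.mul_assoc]
  exact (Complex.nonneg_iff.1 h).1

theorem sq_expectation_le_expectation_mul_self [DecidableEq n] {ρ O : Matrix n n ℂ}
    (hρ : ρ.PosSemidef) (htr : ρ.trace = 1) (hO : O.IsHermitian) :
    expectation ρ O ^ 2 ≤ expectation ρ (O * O) := by
  set μ := expectation ρ O
  have hvar := expectation_conjTranspose_mul_self_nonneg hρ (O - (μ : ℂ) • 1)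
  have hexpand : (O - (μ : ℂ) • 1)ᴴ * (O - (μ : ℂ) • 1) =
      O * O - ((2 * μ : ℝ) : ℂ) • O + ((μ ^ 2 : ℝ) : ℂ) • 1 := by
    rw [conjTranspose_sub, hO.eq, conjTranspose_smul, conjTranspose_one, Complex.star_def,
      Complex.conj_ofReal]
    push_cast
    simp only [Matrix.sub_mul, Matrix.mul_sub, smul_mul_assoc, mul_smul_comm, Matrix.mul_one,
      Matrix.one_mul]
    module
  have hone : expectation ρ 1 = 1 := by simp [expectation, htr]
  rw [hexpand, expectation_add, expectation_sub, expectation_ofReal_smul,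
    expectation_ofReal_smul, hone] at hvar
  nlinarith

theorem expectation_sum_smul_of_orthogonal {ι : Type*} [Fintype ι] {lam : ι → Matrix n n ℂ}
    (horth : ∀ i j, i ≠ j → (lam i * lam j).trace = 0) (c : ι → ℝ) (s : Finset ι) :
    expectation (∑ j, (c j : ℂ) • lam j) (∑ i ∈ s, (c i : ℂ) • lam i) =
      ∑ i ∈ s, c i ^ 2 * (lam i * lam i).trace.re := by
  rw [expectation_sum]
  refine Finset.sum_congr rfl fun i _ => ?_
  rw [expectation_ofReal_smul, expectation, trace_sum_smul_mul_of_orthogonal horth, re_ofReal_mul,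
    ← mul_assoc, ← sq]

theorem two_mul_expectation_sum_smul_mul_self {ι : Type*} (ρ : Matrix n n ℂ) (s : Finset ι)
    (c : ι → ℝ) (lam : ι → Matrix n n ℂ) :
    2 * expectation ρ ((∑ i ∈ s, (c i : ℂ) • lam i) * ∑ i ∈ s, (c i : ℂ) • lam i) =
      ∑ i ∈ s, ∑ j ∈ s, c i * c j * expectation ρ (lam i * lam j + lam j * lam i) := by
  have hswap : ∑ i ∈ s, ∑ j ∈ s, c i * c j * expectation ρ (lam j * lam i) =
      ∑ i ∈ s, ∑ j ∈ s, c i * c j * expectation ρ (lam i * lam j) := by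
    rw [Finset.sum_comm]
    exact Finset.sum_congr rfl fun i _ => Finset.sum_congr rfl fun j _ => by ring
  simp only [Finset.sum_mul_sum, expectation_sum, smul_mul_smul, ← Complex.ofReal_mul,
    expectation_ofReal_smul, expectation_add, mul_add, Finset.sum_add_distrib, hswap]
  ring

theorem expectation_sum_smul_mul_self_le {ι : Type*} [DecidableEq ι] (ρ : Matrix n n ℂ)
    (s : Finset ι) (c : ι → ℝ) (lam : ι → Matrix n n ℂ) {m : ℝ}
    (hm : ∀ i ∈ s, expectation ρ (lam i * lam i) ≤ m) :
    expectation ρ ((∑ i ∈ s, (c i : ℂ) • lam i) * ∑ i ∈ s, (c i : ℂ) • lam i) ≤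
      (∑ i ∈ s, c i ^ 2) * (m + 1 / 2 * √(∑ i ∈ s, ∑ j ∈ s,
        if i ≠ j then expectation ρ (lam i * lam j + lam j * lam i) ^ 2 else 0)) := by
  have hdiag : ∀ i ∈ s, expectation ρ (lam i * lam i + lam i * lam i) ≤ 2 * m := fun i hi => by
    rw [expectation_add, ← two_mul]
    exact mul_le_mul_of_nonneg_left (hm i hi) zero_le_two
  have h := (two_mul_expectation_sum_smul_mul_self ρ s c lam).trans_le
    (Finset.sum_sum_mul_mul_le s c _ hdiag)
  rw [Finset.sum_offDiag_eq_sum_sum_ite s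
    fun i j => expectation ρ (lam i * lam j + lam j * lam i) ^ 2] at h
  linarith

end Expectation

theorem anticommutativity_bound_general (d : ℕ)
    (lam : Fin (d ^ 2) → Matrix (Fin d) (Fin d) ℂ)
    (hherm : ∀ i, (lam i).IsHermitian)
    (horth : ∀ i j, i ≠ j → Matrix.trace (lam i * lam j) = 0)
    (hbasis : LinearIndependent ℂ lam)
    (c : Fin (d ^ 2) → ℝ)
    (ρ : Matrix (Fin d) (Fin d) ℂ)
    (hρ : ρ = ∑ i, (c i : ℂ) • lam i)
    (hpsd : ρ.PosSemidef) (htr : Matrix.trace ρ = 1)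
    (A : Finset (Fin (d ^ 2))) (hA : A.Nonempty) (K : ℝ)
    (hK : (1 / 2) * Real.sqrt (∑ i ∈ A, ∑ j ∈ A,
        if i ≠ j then
          (Matrix.trace (ρ * (lam i * lam j + lam j * lam i))).re ^ 2
        else 0) ≤ K) :
    ∑ i ∈ A, c i ^ 2 ≤
      ((A.sup' hA fun i => (Matrix.trace (ρ * lam i ^ 2)).re) + K) /
        (A.inf' hA fun i => (Matrix.trace (lam i ^ 2)).re) ^ 2 := by
  simp only [sq (lam _), ← expectation.eq_1]
  set S := ∑ i ∈ A, c i ^ 2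
  set m := A.sup' hA fun i => expectation ρ (lam i * lam i)
  set t := A.inf' hA fun i => (lam i * lam i).trace.re
  set O := ∑ i ∈ A, (c i : ℂ) • lam i
  have hS : 0 ≤ S := Finset.sum_nonneg fun i _ => sq_nonneg (c i)
  have ht : 0 < t := (Finset.lt_inf'_iff hA).2 fun i _ =>
    (hherm i).re_trace_mul_self_pos (hbasis.ne_zero i)
  have hm : 0 ≤ m := by
    obtain ⟨i, hi⟩ := id hA
    refine Finset.le_sup'_of_le _ hi ?_
    simpa only [(hherm i).eq] using expectation_conjTranspose_mul_self_nonneg hpsd (lam i)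
  have hmean : t * S ≤ expectation ρ O := by
    rw [hρ, expectation_sum_smul_of_orthogonal horth, Finset.mul_sum]
    exact Finset.sum_le_sum fun i hi => by
      rw [mul_comm]
      exact mul_le_mul_of_nonneg_left (Finset.inf'_le _ hi) (sq_nonneg _)
  have hvar : expectation ρ O ^ 2 ≤ expectation ρ (O * O) :=
    sq_expectation_le_expectation_mul_self hpsd htr
      (isSelfAdjoint_sum A fun i _ => (hherm i).smul (Complex.conj_ofReal _))
  have hsecond : expectation ρ (O * O) ≤ S * (m + K) :=
    (expectation_sum_smul_mul_self_le ρ A c lam fun i hi =>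
      Finset.le_sup' (fun i => expectation ρ (lam i * lam i)) hi).trans
      (mul_le_mul_of_nonneg_left (add_le_add_right hK m) hS)
  have hK₀ : 0 ≤ K := le_trans (mul_nonneg one_half_pos.le (Real.sqrt_nonneg _)) hK
  exact le_div_sq_of_mul_le_of_sq_le_mul ht hS (by linarith) hmean (hvar.trans hsecond)

/-- Anticommutativity bound: for an orthogonal self-adjoint basis `{λ_i}` of the
`d×d` Hermitian matrices and a subset `A` whose mutual anticommutators with respect
to a density matrix `ρ = Σ c_i λ_i` are bounded by `K`, the Bloch vector components
satisfy `Σ_{i∈A} c_i² ≤ (max_{i∈A}⟨λ_i²⟩ + K) / (min_{i∈A} Tr(λ_i²))²`. -/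
theorem anticommutativity_bound (d : ℕ) [NeZero d]
    (lam : Fin (d ^ 2) → Matrix (Fin d) (Fin d) ℂ)
    (hherm : ∀ i, (lam i).IsHermitian)
    (horth : ∀ i j, i ≠ j → Matrix.trace (lam i * lam j) = 0)
    (hbasis : LinearIndependent ℂ lam)
    (c : Fin (d ^ 2) → ℝ)
    (ρ : Matrix (Fin d) (Fin d) ℂ)
    (hρ : ρ = ∑ i, (c i : ℂ) • lam i)
    (hpsd : ρ.PosSemidef) (htr : Matrix.trace ρ = 1)
    (A : Finset (Fin (d ^ 2))) (hA : A.Nonempty) (K : ℝ)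
    (hK : (1 / 2) * Real.sqrt (∑ i ∈ A, ∑ j ∈ A,
        if i ≠ j then
          (Matrix.trace (ρ * (lam i * lam j + lam j * lam i))).re ^ 2
        else 0) ≤ K) :
    ∑ i ∈ A, c i ^ 2 ≤
      ((A.sup' hA fun i => (Matrix.trace (ρ * lam i ^ 2)).re) + K) /
        (A.inf' hA fun i => (Matrix.trace (lam i ^ 2)).re) ^ 2 :=
  anticommutativity_bound_general d lam hherm horth hbasis c ρ hρ hpsd htr A hA K hK
end

section
/- Let λ_1,...,λ_k be pairwise anticommuting Hermitian matrices on ℂ^d with Tr(λ_iλ_j) = d δ_{ij}. Then for any density matrix ρ, Σ_{i=1}^k Tr(ρλ_i)² ≤ max_i Tr(ρ λ_i²). -/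
open Matrix Complex BigOperators
open scoped ComplexOrder

lemma trace_conjTranspose_mul_self_re_nonneg {n : Type*} [Fintype n]
    (M : Matrix n n ℂ) : 0 ≤ (Matrix.trace (Mᴴ * M)).re := by
  have h : Matrix.trace (Mᴴ * M) = ∑ i, ∑ j, (starRingEnd ℂ) (M j i) * M j i := by
    simp [Matrix.trace, Matrix.mul_apply, Matrix.diag, Matrix.conjTranspose_apply]
  rw [h]
  simp only [Complex.re_sum]
  refine Finset.sum_nonneg fun i _ => Finset.sum_nonneg fun j _ => ?_
  rw [mul_comm, Complex.mul_conj]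
  simp [Complex.normSq_nonneg]

lemma trace_mul_psd_re_nonneg {n : Type*} [Fintype n] [DecidableEq n]
    {ρ A : Matrix n n ℂ} (hρ : ρ.PosSemidef) (hA : A.PosSemidef) :
    0 ≤ (Matrix.trace (ρ * A)).re := by
  obtain ⟨B, hB⟩ : ∃ B : Matrix n n ℂ, _ = Bᴴ * B := by
    open scoped MatrixOrder in exact CStarAlgebra.nonneg_iff_eq_star_mul_self.mp hρ.nonneg
  obtain ⟨C, hC⟩ : ∃ C : Matrix n n ℂ, _ = Cᴴ * C := by
    open scoped MatrixOrder in exact CStarAlgebra.nonneg_iff_eq_star_mul_self.mp hA.nonneg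
  have key : Matrix.trace (ρ * A) = Matrix.trace ((C * Bᴴ)ᴴ * (C * Bᴴ)) := by
    rw [hB, hC]
    rw [Matrix.conjTranspose_mul, Matrix.conjTranspose_conjTranspose]
    rw [show Bᴴ * B * (Cᴴ * C) = Bᴴ * (B * Cᴴ * C) by noncomm_ring]
    rw [Matrix.trace_mul_comm]
    noncomm_ring
  rw [key]
  exact trace_conjTranspose_mul_self_re_nonneg _

/-- For pairwise anticommuting Hermitian matrices `λ_1, …, λ_k` with
`Tr(λ_i λ_j) = d δ_{ij}` and any density matrix `ρ`,
`Σ_i Tr(ρ λ_i)² ≤ max_i Tr(ρ λ_i²)`. -/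
theorem anticommuting_expectation_bound (d k : ℕ) [NeZero d] [NeZero k]
    (lam : Fin k → Matrix (Fin d) (Fin d) ℂ)
    (hherm : ∀ i, (lam i).IsHermitian)
    (horth : ∀ i j, Matrix.trace (lam i * lam j) = if i = j then (d : ℂ) else 0)
    (hanti : ∀ i j, i ≠ j → lam i * lam j + lam j * lam i = 0)
    (ρ : Matrix (Fin d) (Fin d) ℂ)
    (hpsd : ρ.PosSemidef) (htr : Matrix.trace ρ = 1) :
    ∑ i : Fin k, (Matrix.trace (ρ * lam i)).re ^ 2 ≤
      Finset.univ.sup' Finset.univ_nonempty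
        (fun i : Fin k => (Matrix.trace (ρ * lam i ^ 2)).re) := by
  classical
  set c : Fin k → ℝ := fun i => (Matrix.trace (ρ * lam i)).re with hc
  set t : Fin k → ℝ := fun i => (Matrix.trace (ρ * lam i ^ 2)).re with ht
  set S : ℝ := ∑ i, c i ^ 2 with hS
  set M : ℝ := Finset.univ.sup' Finset.univ_nonempty t with hM
  show S ≤ M
  -- realness of expectation values
  have hreal : ∀ i, Matrix.trace (ρ * lam i) = (c i : ℂ) := by
    intro i
    have h1 : (starRingEnd ℂ) (Matrix.trace (ρ * lam i)) = Matrix.trace (ρ * lam i) := by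
      rw [show (starRingEnd ℂ) (Matrix.trace (ρ * lam i)) = star (Matrix.trace (ρ * lam i))
        from rfl, ← Matrix.trace_conjTranspose, Matrix.conjTranspose_mul, (hherm i).eq,
        hpsd.1.eq, Matrix.trace_mul_comm]
    exact (Complex.conj_eq_iff_re.mp h1).symm
  -- the observable O
  set O : Matrix (Fin d) (Fin d) ℂ := ∑ i, (c i : ℂ) • lam i with hO
  set F : ℂ := Matrix.trace (ρ * (O * O)) with hF0
  have hOO : O * O = ∑ i, ∑ j, ((c i : ℂ) * (c j : ℂ)) • (lam i * lam j) := by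
    rw [hO, Finset.sum_mul_sum]
    simp only [Matrix.smul_mul, Matrix.mul_smul, smul_smul]
    exact Finset.sum_congr rfl fun i _ => Finset.sum_congr rfl fun j _ => by rw [mul_comm]
  have hF : F = ∑ i, ∑ j, (c i : ℂ) * (c j : ℂ) * Matrix.trace (ρ * (lam i * lam j)) := by
    rw [hF0, hOO]
    simp [Matrix.mul_sum, Matrix.mul_smul, smul_eq_mul]
  have hF' : F = ∑ i, ∑ j, (c j : ℂ) * (c i : ℂ) * Matrix.trace (ρ * (lam j * lam i)) := by
    rw [hF]; exact Finset.sum_comm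
  have hterm : ∀ i j, (c i : ℂ) * c j * Matrix.trace (ρ * (lam i * lam j)) +
      (c j : ℂ) * c i * Matrix.trace (ρ * (lam j * lam i)) =
      if i = j then 2 * (c i : ℂ) ^ 2 * Matrix.trace (ρ * (lam i * lam i)) else 0 := by
    intro i j
    by_cases h : i = j
    · subst h; simp; ring
    · simp only [h, if_false]
      have h2 : Matrix.trace (ρ * (lam i * lam j)) + Matrix.trace (ρ * (lam j * lam i)) = 0 := by
        rw [← Matrix.trace_add, ← Matrix.mul_add, hanti i j h, Matrix.mul_zero,
          Matrix.trace_zero]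
      linear_combination (c i : ℂ) * c j * h2
  have key : F + F = ∑ i, 2 * (c i : ℂ) ^ 2 * Matrix.trace (ρ * (lam i * lam i)) := by
    nth_rewrite 1 [hF]
    nth_rewrite 1 [hF']
    rw [← Finset.sum_add_distrib]
    refine Finset.sum_congr rfl fun i _ => ?_
    rw [← Finset.sum_add_distrib]
    simp_rw [hterm i]
    simp
  have hFdiag : F = ∑ i, (c i : ℂ) ^ 2 * Matrix.trace (ρ * (lam i * lam i)) := by
    have h2 : (2 : ℂ) * F = 2 * ∑ i, (c i : ℂ) ^ 2 * Matrix.trace (ρ * (lam i * lam i)) := by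
      rw [two_mul, key, Finset.mul_sum]
      exact Finset.sum_congr rfl fun i _ => by ring
    exact mul_left_cancel₀ two_ne_zero h2
  have hFre : F.re = ∑ i, c i ^ 2 * t i := by
    rw [hFdiag, Complex.re_sum]
    refine Finset.sum_congr rfl fun i _ => ?_
    have : ((c i : ℂ)) ^ 2 = ((c i ^ 2 : ℝ) : ℂ) := by push_cast; ring
    rw [this, Complex.re_ofReal_mul]
    show c i ^ 2 * (ρ * (lam i * lam i)).trace.re = c i ^ 2 * (ρ * lam i ^ 2).trace.re
    rw [pow_two (lam i)]
  -- trace(ρ O) = S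
  have hOtr : Matrix.trace (ρ * O) = (S : ℂ) := by
    rw [hO, Matrix.mul_sum]
    simp only [Matrix.mul_smul, Matrix.trace_sum, Matrix.trace_smul, smul_eq_mul, hreal, hS]
    push_cast
    exact Finset.sum_congr rfl fun i _ => by ring
  -- variance nonnegativity
  set N : Matrix (Fin d) (Fin d) ℂ := O - (S : ℂ) • 1 with hN
  have hNherm : Nᴴ = N := by
    simp [hN, hO, Matrix.conjTranspose_sub, Matrix.conjTranspose_smul,
      Matrix.conjTranspose_sum, (hherm _).eq, Complex.star_def, Complex.conj_ofReal]
  have hNNpsd : (N * N).PosSemidef := by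
    have := Matrix.posSemidef_conjTranspose_mul_self N
    rwa [hNherm] at this
  have hvar : 0 ≤ (Matrix.trace (ρ * (N * N))).re := trace_mul_psd_re_nonneg hpsd hNNpsd
  have hNN : N * N = O * O - (2 * (S : ℂ)) • O + ((S : ℂ) ^ 2) • 1 := by
    rw [hN]
    simp only [Matrix.sub_mul, Matrix.mul_sub, Matrix.smul_mul, Matrix.mul_smul,
      Matrix.one_mul, Matrix.mul_one, smul_smul]
    module
  have htrN : Matrix.trace (ρ * (N * N)) = F - (S : ℂ) ^ 2 := by
    rw [hNN, Matrix.mul_add, Matrix.mul_sub, Matrix.mul_smul, Matrix.mul_smul,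
      Matrix.trace_add, Matrix.trace_sub, Matrix.trace_smul, Matrix.trace_smul,
      Matrix.mul_one, hOtr, htr, ← hF0]
    simp only [smul_eq_mul]
    ring
  have hvar2 : S ^ 2 ≤ F.re := by
    rw [htrN] at hvar
    have : (((S : ℂ)) ^ 2).re = S ^ 2 := by
      norm_cast
    simp only [Complex.sub_re, this] at hvar
    linarith
  -- nonnegativity of t and M
  have htnonneg : ∀ i, 0 ≤ t i := by
    intro i
    refine trace_mul_psd_re_nonneg hpsd ?_
    have := Matrix.posSemidef_conjTranspose_mul_self (lam i)
    rw [(hherm i).eq, ← pow_two] at this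
    exact this
  have htM : ∀ i, t i ≤ M := fun i => Finset.le_sup' t (Finset.mem_univ i)
  obtain ⟨i0, -⟩ := (Finset.univ_nonempty : (Finset.univ : Finset (Fin k)).Nonempty)
  have hMnonneg : 0 ≤ M := le_trans (htnonneg i0) (htM i0)
  have hbound : F.re ≤ S * M := by
    rw [hFre, hS, Finset.sum_mul]
    exact Finset.sum_le_sum fun i _ => mul_le_mul_of_nonneg_left (htM i) (sq_nonneg (c i))
  have hSnonneg : 0 ≤ S := Finset.sum_nonneg fun i _ => sq_nonneg (c i)
  rcases eq_or_lt_of_le hSnonneg with h | h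
  · rw [← h]; exact hMnonneg
  · nlinarith [hvar2, hbound]
end

section
/- There do not exist four pairwise anticommuting Heisenberg-Weyl observables: if 2-dimensional real vectors A, B, C, D satisfy |A×B| = k₁π/2, |A×C| = k₂π/2, |A×D| = k₃π/2, |B×C| = k₄π/2, |B×D| = k₅π/2, |C×D| = k₆π/2 with all k_i odd integers, a contradiction arises, since the cross products must satisfy k₁k₆ + k₂k₅ - k₃k₄ = 0, which is impossible with all k_i odd. -/
/-- The 2D cross product `u × v = u₁v₂ - u₂v₁`. -/
def cross2 (u v : ℝ × ℝ) : ℝ := u.1 * v.2 - u.2 * v.1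

/-- From `|x| = k·π/2` with `k` odd, get a signed odd integer `s` with `x = s·π/2`. -/
lemma signed_version {x : ℝ} {k : ℤ} (hk : Odd k)
    (h : |x| = (k : ℝ) * Real.pi / 2) :
    ∃ s : ℤ, Odd s ∧ x = (s : ℝ) * Real.pi / 2 := by
  rcases abs_choice x with h' | h'
  · exact ⟨k, hk, by rw [← h', h]⟩
  · exact ⟨-k, hk.neg, by push_cast; rw [h'] at h; linarith⟩

/-- There are no four pairwise anticommuting Heisenberg–Weyl observables: no four
phase-space vectors `A,B,C,D ∈ ℝ²` can have all six pairwise cross products equal in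
absolute value to odd multiples of `π/2`. -/
theorem no_four_anticommuting_HW :
    ¬ ∃ (A B C D : ℝ × ℝ) (k₁ k₂ k₃ k₄ k₅ k₆ : ℤ),
        Odd k₁ ∧ Odd k₂ ∧ Odd k₃ ∧ Odd k₄ ∧ Odd k₅ ∧ Odd k₆ ∧
        |cross2 A B| = (k₁ : ℝ) * Real.pi / 2 ∧
        |cross2 A C| = (k₂ : ℝ) * Real.pi / 2 ∧
        |cross2 A D| = (k₃ : ℝ) * Real.pi / 2 ∧
        |cross2 B C| = (k₄ : ℝ) * Real.pi / 2 ∧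
        |cross2 B D| = (k₅ : ℝ) * Real.pi / 2 ∧
        |cross2 C D| = (k₆ : ℝ) * Real.pi / 2 := by
  rintro ⟨A, B, C, D, k₁, k₂, k₃, k₄, k₅, k₆,
    hk₁, hk₂, hk₃, hk₄, hk₅, hk₆, h₁, h₂, h₃, h₄, h₅, h₆⟩
  obtain ⟨s₁, o₁, e₁⟩ := signed_version hk₁ h₁
  obtain ⟨s₂, o₂, e₂⟩ := signed_version hk₂ h₂
  obtain ⟨s₃, o₃, e₃⟩ := signed_version hk₃ h₃
  obtain ⟨s₄, o₄, e₄⟩ := signed_version hk₄ h₄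
  obtain ⟨s₅, o₅, e₅⟩ := signed_version hk₅ h₅
  obtain ⟨s₆, o₆, e₆⟩ := signed_version hk₆ h₆
  -- Plücker identity
  have plucker : cross2 A B * cross2 C D + cross2 A D * cross2 B C
      - cross2 A C * cross2 B D = 0 := by
    simp only [cross2]; ring
  rw [e₁, e₂, e₃, e₄, e₅, e₆] at plucker
  have hpi := Real.pi_ne_zero
  have hz : ((s₁ * s₆ + s₃ * s₄ - s₂ * s₅ : ℤ) : ℝ) * (Real.pi * Real.pi) = 0 := by
    push_cast
    nlinarith [plucker]
  have : (s₁ * s₆ + s₃ * s₄ - s₂ * s₅ : ℤ) = 0 := by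
    have := mul_eq_zero.mp hz
    rcases this with h | h
    · exact_mod_cast h
    · exact absurd h (mul_ne_zero hpi hpi)
  have hodd : Odd (s₁ * s₆ + s₃ * s₄ - s₂ * s₅) :=
    ((o₁.mul o₆).add_odd (o₃.mul o₄)).sub_odd (o₂.mul o₅)
  rw [this] at hodd
  simp at hodd
end
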